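/- Let k ≥ 2 and let b₁, …, b_k be integers with b_i ≥ 2 for all i and b_j ≥ 3 for at least one j. Then the symmetric k × k 'cycle' matrix A with A_{ii} = −b_i, A_{i,i+1} = A_{i+1,i} = 1 (indices mod k, and with A_{1,k} = A_{k,1} = 1), and all other entries 0, is negative definite. (For k = 2 interpret the cyclic adjacency as A_{1,2} = A_{2,1} = 2.) -/

import Mathlib

/-- The intersection matrix of a cyclic configuration of `k` curves with self-intersections
`−b_i`: `A_{ii} = −b_i`, cyclically adjacent entries equal to the number of cyclic adjacencies
(so that for `k = 2` the off-diagonal entries are `2`), all other entries `0`. -/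
def cycleMatrix (k : ℕ) (b : Fin k → ℤ) : Matrix (Fin k) (Fin k) ℤ :=
  Matrix.of fun i j =>
    if i = j then -b i
    else (if ((i : ℕ) + 1) % k = (j : ℕ) then 1 else 0) +
         (if ((j : ℕ) + 1) % k = (i : ℕ) then 1 else 0)

/-!
Writing `A = -diag b + P + Pᵀ` with `P` the permutation matrix of the cyclic shift `i ↦ i + 1`
(for `k = 2` an involution, so `P + Pᵀ = 2P`, matching the convention) gives
`xᵀ A x = -(∑ (bᵢ - 2) xᵢ² + ∑ (xᵢ - xᵢ₊₁)²)`. Both sums are nonnegative when all `bᵢ ≥ 2`;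
if they both vanish, then `x` is constant along the cycle and `x_j = 0` for an index with
`b_j ≥ 3`, so `x = 0`.
-/

open Matrix Finset

section CycleForm

variable {ι R : Type*} [Fintype ι] [CommRing R]

theorem sum_sq_sub_comp_perm (σ : Equiv.Perm ι) (x : ι → R) :
    ∑ i, (x i - x (σ i)) ^ 2 = 2 * ∑ i, x i ^ 2 - 2 * ∑ i, x i * x (σ i) := by
  have hσ : ∑ i, x (σ i) ^ 2 = ∑ i, x i ^ 2 := Equiv.sum_comp σ (fun i => x i ^ 2)
  simp only [sub_sq, mul_assoc, sum_add_distrib, sum_sub_distrib, ← mul_sum, hσ]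
  ring

variable [DecidableEq ι]

theorem dotProduct_neg_diagonal_add_permMatrix_mulVec (d : ι → R) (σ : Equiv.Perm ι)
    (x : ι → R) :
    x ⬝ᵥ ((-diagonal d + σ.permMatrix R + (σ.permMatrix R)ᵀ) *ᵥ x) =
      -∑ i, d i * x i ^ 2 + 2 * ∑ i, x i * x (σ i) := by
  have hσ : x ⬝ᵥ ((σ.permMatrix R)ᵀ *ᵥ x) = x ⬝ᵥ (σ.permMatrix R *ᵥ x) := by
    rw [mulVec_transpose, dotProduct_comm, dotProduct_mulVec]
  have hd : x ⬝ᵥ (diagonal d *ᵥ x) = ∑ i, d i * x i ^ 2 :=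
    sum_congr rfl fun i _ => by simp only [mulVec_diagonal]; ring
  rw [add_mulVec, add_mulVec, dotProduct_add, dotProduct_add, hσ, neg_mulVec, dotProduct_neg, hd,
    permMatrix_mulVec]
  simp only [dotProduct, Function.comp_apply]
  ring

theorem dotProduct_neg_diagonal_add_permMatrix_mulVec_eq_neg_sum_sq (d : ι → R)
    (σ : Equiv.Perm ι) (x : ι → R) :
    x ⬝ᵥ ((-diagonal d + σ.permMatrix R + (σ.permMatrix R)ᵀ) *ᵥ x) =
      -(∑ i, (d i - 2) * x i ^ 2 + ∑ i, (x i - x (σ i)) ^ 2) := by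
  rw [dotProduct_neg_diagonal_add_permMatrix_mulVec, sum_sq_sub_comp_perm]
  simp only [sub_mul, sum_sub_distrib, ← mul_sum]
  ring

end CycleForm

theorem Fin.apply_eq_apply_zero_of_forall_apply_add_one {α : Type*} {n : ℕ}
    {f : Fin (n + 1) → α} (hf : ∀ i, f (i + 1) = f i) (i : Fin (n + 1)) : f i = f 0 := by
  induction i using Fin.induction with
  | zero => rfl
  | succ i ih => rw [← Fin.coeSucc_eq_succ, hf, ih]

theorem sum_mul_sq_add_sum_sq_sub_add_one_pos {k : ℕ} [NeZero k] {c x : Fin k → ℝ}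
    (hc : ∀ i, 0 ≤ c i) {j : Fin k} (hj : 0 < c j) (hx : x ≠ 0) :
    0 < ∑ i, c i * x i ^ 2 + ∑ i, (x i - x (i + 1)) ^ 2 := by
  have hc_sum : 0 ≤ ∑ i, c i * x i ^ 2 := sum_nonneg fun i _ => mul_nonneg (hc i) (sq_nonneg _)
  have hd_sum : 0 ≤ ∑ i, (x i - x (i + 1)) ^ 2 := sum_nonneg fun i _ => sq_nonneg _
  refine (add_nonneg hc_sum hd_sum).lt_of_ne fun h => hx ?_
  obtain ⟨hc0, hd0⟩ := (add_eq_zero_iff_of_nonneg hc_sum hd_sum).1 h.symm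
  have hxj : x j = 0 := by
    have := (sum_eq_zero_iff_of_nonneg fun i _ => mul_nonneg (hc i) (sq_nonneg (x i))).1 hc0 j
      (mem_univ j)
    exact pow_eq_zero_iff two_ne_zero |>.1 ((mul_eq_zero.1 this).resolve_left hj.ne')
  have hstep : ∀ i, x (i + 1) = x i := fun i => by
    have := (sum_eq_zero_iff_of_nonneg fun i _ => sq_nonneg (x i - x (i + 1))).1 hd0 i
      (mem_univ i)
    exact (sub_eq_zero.1 (pow_eq_zero_iff two_ne_zero |>.1 this)).symm
  obtain ⟨n, rfl⟩ := Nat.exists_eq_succ_of_ne_zero (NeZero.ne k)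
  funext i
  rw [Fin.apply_eq_apply_zero_of_forall_apply_add_one hstep i,
    ← Fin.apply_eq_apply_zero_of_forall_apply_add_one hstep j, hxj, Pi.zero_apply]

theorem cycleMatrix_map_eq {k : ℕ} [NeZero k] (hk : 2 ≤ k) (b : Fin k → ℤ) (R : Type*) [Ring R] :
    (cycleMatrix k b).map (Int.cast : ℤ → R) =
      -diagonal (fun i => (b i : R)) + (Equiv.addRight 1).permMatrix R +
        ((Equiv.addRight 1).permMatrix R)ᵀ := by
  have hval : ∀ i j : Fin k, ((i : ℕ) + 1) % k = j ↔ j = i + 1 := by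
    intro i j
    rw [Fin.ext_iff, Fin.val_add, Fin.val_one', Nat.mod_eq_of_lt (by omega : 1 < k), eq_comm]
  have h10 : (1 : Fin k) ≠ 0 := by
    rw [Ne, Fin.ext_iff, Fin.val_one', Fin.val_zero, Nat.mod_eq_of_lt (by omega : 1 < k)]
    exact one_ne_zero
  ext i j
  by_cases hij : i = j
  · subst hij
    simp [cycleMatrix, h10]
  · simp [cycleMatrix, hval, hij, add_neg_eq_iff_eq_add, eq_comm (a := i + 1)]

/-- the cyclic intersection matrix with all `b_i ≥ 2` and some `b_j ≥ 3`
is negative definite. -/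
theorem cycleMatrix_negDef (k : ℕ) (hk : 2 ≤ k) (b : Fin k → ℤ) (hb : ∀ i, 2 ≤ b i)
    (hb3 : ∃ j, 3 ≤ b j) :
    ∀ x : Fin k → ℝ, x ≠ 0 →
      dotProduct x (((cycleMatrix k b).map (Int.cast : ℤ → ℝ)).mulVec x) < 0 := by
  intro x hx
  have : NeZero k := ⟨by omega⟩
  obtain ⟨j, hj⟩ := hb3
  rw [cycleMatrix_map_eq hk, dotProduct_neg_diagonal_add_permMatrix_mulVec_eq_neg_sum_sq,
    neg_lt_zero]
  refine sum_mul_sq_add_sum_sq_sub_add_one_pos (fun i => ?_) (j := j) ?_ hx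
  · exact sub_nonneg.2 (by exact_mod_cast hb i)
  · linarith [(by exact_mod_cast hj : (3 : ℝ) ≤ b j)]
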